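/- In the Set Cover fitness graph, let S ⊆ V be a seed set such that the sets in S∩V₁ do not cover V₂ (i.e., some e ∈ V₂ belongs to no A ∈ S∩V₁). Then the fixation probability satisfies fp_𝒢(S) ≤ 1 − ((1/n)/((1/n)+(n−1)·y))^n. -/

import Mathlib

open Finset
open scoped Classical

/-- A fitness graph: a finite strongly connected weighted directed graph together with
mutant and resident fitness functions. `w u v > 0` encodes that `(u,v)` is an edge
of non-zero weight; `w u ·` is a probability distribution. -/
structure FitnessGraph (V : Type) [Fintype V] [DecidableEq V] where
  w : V → V → ℝ
  m : V → ℝ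
  r : V → ℝ
  w_nonneg : ∀ u v, 0 ≤ w u v
  w_rowsum : ∀ u, ∑ v, w u v = 1
  strongly_connected : ∀ u v : V, Relation.ReflTransGen (fun a b => 0 < w a b) u v
  m_pos : ∀ u, 0 < m u
  r_pos : ∀ u, 0 < r u

variable {V : Type} [Fintype V] [DecidableEq V]

/-- A fitness graph is mutant-biased if `m(u) ≥ r(u)` for every node `u`. -/
def FitnessGraph.MutantBiased (G : FitnessGraph V) : Prop :=
  ∀ u, G.r u ≤ G.m u

/-- The (out-)degree of a node: the number of neighbors along edges of non-zero weight. -/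
noncomputable def FitnessGraph.deg (G : FitnessGraph V) (u : V) : ℕ :=
  (Finset.univ.filter fun v => 0 < G.w u v).card

/-- A fitness graph is undirected if its edge relation is symmetric and the weights
are uniform: `w(u,v) = 1/d(u)` for every edge `(u,v)`. -/
def FitnessGraph.Undirected (G : FitnessGraph V) : Prop :=
  (∀ u v, 0 < G.w u v → 0 < G.w v u) ∧
  ∀ u v, 0 < G.w u v → G.w u v = 1 / (G.deg u : ℝ)

/-- The fitness of node `u` in configuration `X`: `m(u)` if `u` is a mutant, `r(u)` otherwise. -/
def FitnessGraph.fit (G : FitnessGraph V) (X : Finset V) (u : V) : ℝ :=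
  if u ∈ X then G.m u else G.r u

/-- Total population fitness in configuration `X`. -/
def FitnessGraph.totalFit (G : FitnessGraph V) (X : Finset V) : ℝ :=
  ∑ u, G.fit X u

/-- The configuration resulting from `X` when `u` reproduces and replaces `v`. -/
def moranNext (X : Finset V) (u v : V) : Finset V :=
  if u ∈ X then insert v X else X.erase v

/-- One-step transition probability of the Heterogeneous Moran process. -/
noncomputable def FitnessGraph.step (G : FitnessGraph V) (X Y : Finset V) : ℝ :=
  ∑ u, ∑ v, (G.fit X u / G.totalFit X) * G.w u v * (if moranNext X u v = Y then 1 else 0)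

/-- `t`-step transition probability of the Heterogeneous Moran process. -/
noncomputable def FitnessGraph.stepN (G : FitnessGraph V) : ℕ → Finset V → Finset V → ℝ
  | 0, X, Y => if X = Y then 1 else 0
  | t + 1, X, Y => ∑ Z, FitnessGraph.stepN G t X Z * G.step Z Y

/-- Fixation probability: the probability that, started from seed set `S`, the process
eventually reaches the all-mutant configuration `V`; since `V` is absorbing this equals
`⨆ t, P(X_t = V)`. -/
noncomputable def FitnessGraph.fp (G : FitnessGraph V) (S : Finset V) : ℝ :=
  ⨆ t : ℕ, G.stepN t S Finset.univ

/-- One-step transition probability of the Moran process stopped upon reaching the set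
of configurations `A` (configurations in `A` are made absorbing). -/
noncomputable def stopStep (G : FitnessGraph V) (A : Set (Finset V)) (X Y : Finset V) : ℝ :=
  if X ∈ A then (if Y = X then 1 else 0) else G.step X Y

/-- `t`-step transition probability of the stopped process. -/
noncomputable def stopStepN (G : FitnessGraph V) (A : Set (Finset V)) :
    ℕ → Finset V → Finset V → ℝ
  | 0, X, Y => if X = Y then 1 else 0
  | t + 1, X, Y => ∑ Z, stopStepN G A t X Z * stopStep G A Z Y

/-- The probability that the Heterogeneous Moran process started at `X0` ever reaches a
configuration in `A`: the supremum over `t` of the probability that the process stopped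
at `A` is in `A` at time `t`. -/
noncomputable def reachProb (G : FitnessGraph V) (A : Set (Finset V)) (X0 : Finset V) : ℝ :=
  ⨆ t : ℕ, ∑ Y ∈ Finset.univ.filter (fun Y => Y ∈ A), stopStepN G A t X0 Y

/-- The Set Cover fitness graph for an instance `(U, 𝒮)` with parameters `x ≥ 1` and
`0 < y ≤ 1`: the vertex set is `V₁ ⊔ V₂` with `V₁ = 𝒮`, `V₂ = U`; there is an edge from
`A ∈ V₁` to each `e ∈ A` and all edges from `V₂` to `V₁`, with uniform weights;
residents have fitness `1` everywhere, mutants have fitness `x` on `V₁` and `y` on `V₂`. -/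
def IsSetCoverGraph {U : Type} [Fintype U] [DecidableEq U] (𝒮 : Finset (Finset U))
    (x y : ℝ) (G : FitnessGraph ({A // A ∈ 𝒮} ⊕ U)) : Prop :=
  (∀ (A : {A // A ∈ 𝒮}) (e : U),
      G.w (Sum.inl A) (Sum.inr e) = if e ∈ A.1 then 1 / (A.1.card : ℝ) else 0) ∧
  (∀ A B : {A // A ∈ 𝒮}, G.w (Sum.inl A) (Sum.inl B) = 0) ∧
  (∀ (e : U) (A : {A // A ∈ 𝒮}), G.w (Sum.inr e) (Sum.inl A) = 1 / (𝒮.card : ℝ)) ∧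
  (∀ e e' : U, G.w (Sum.inr e) (Sum.inr e') = 0) ∧
  (∀ A : {A // A ∈ 𝒮}, G.m (Sum.inl A) = x) ∧
  (∀ e : U, G.m (Sum.inr e) = y) ∧
  (∀ u : {A // A ∈ 𝒮} ⊕ U, G.r u = 1)


/-!
Let `h(X)` be the extinction probability; fixation and extinction are disjoint, so
`fp(S) ≤ 1 - h(S)`, and `h` is superharmonic for the one-step kernel. Call `X` non-covering if
some element lies in no mutant set, and measure it by the size of its closure (`X` together
with all elements of its mutant sets). In a nonempty non-covering `X` with total fitness `F`
some resident (fitness 1) reproduces, with probability at least `1/(nF)`, onto a vertex whose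
removal shrinks the closure; the only moves that can destroy non-covering or enlarge the
closure are reproductions of the at most `n - 1` mutant elements (fitness `y`), of total
probability at most `(n-1)y/F`. At a minimiser of `h` among non-covering configurations of
closure size `k + 1`, superharmonicity then gives `h ≥ p · (bound for size ≤ k)` with
`p = (1/n)/((1/n) + (n-1)y)`, so `h ≥ p^k` by induction. A non-covering seed misses some set
vertex, so its closure has size at most `n - 1`.
-/

lemma mul_le_of_superharmonic {σ : Type*} [Fintype σ] [DecidableEq σ] {P : σ → σ → ℝ}
    (hP : ∀ a b, 0 ≤ P a b) (hP1 : ∀ a, ∑ b, P a b = 1) {h : σ → ℝ} (hh : ∀ a, 0 ≤ h a)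
    (hsup : ∀ a, ∑ b, P a b * h b ≤ h a) {D R : Finset σ} (hDR : D ⊆ R) {β p : ℝ}
    (hβ : 0 ≤ β) (hp : p ≤ 1) (hD : ∀ b ∈ D, β ≤ h b)
    (hpos : ∀ a ∈ R \ D, 0 < ∑ b ∈ D, P a b)
    (hexit : ∀ a ∈ R \ D, p * (∑ b ∈ D, P a b + ∑ b ∈ Rᶜ, P a b) ≤ ∑ b ∈ D, P a b) :
    ∀ a ∈ R, p * β ≤ h a := by
  intro a ha
  by_cases haD : a ∈ D
  · nlinarith [hD a haD]
  -- It suffices to bound `h` at a minimiser `a₀` of `h` on `R \ D`, where superharmonicity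
  -- gives `h a₀ * (P(D) + P(Rᶜ)) ≥ β * P(D)`.
  obtain ⟨a₀, ha₀, hmin⟩ := (R \ D).exists_min_image h ⟨a, mem_sdiff.2 ⟨ha, haD⟩⟩
  refine le_trans ?_ (hmin a (mem_sdiff.2 ⟨ha, haD⟩))
  have hsplit : ∀ f : σ → ℝ, ∑ b, f b = ∑ b ∈ R \ D, f b + ∑ b ∈ D, f b + ∑ b ∈ Rᶜ, f b := by
    intro f
    rw [sum_sdiff hDR, ← sum_add_sum_compl R f]
  have hlow : h a₀ * ∑ b ∈ R \ D, P a₀ b + β * ∑ b ∈ D, P a₀ b ≤ h a₀ := by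
    refine le_trans ?_ (hsup a₀)
    rw [hsplit, mul_sum, mul_sum]
    have hC : ∑ b ∈ R \ D, h a₀ * P a₀ b ≤ ∑ b ∈ R \ D, P a₀ b * h b :=
      sum_le_sum fun b hb => by nlinarith [hmin b hb, hP a₀ b]
    have hD' : ∑ b ∈ D, β * P a₀ b ≤ ∑ b ∈ D, P a₀ b * h b :=
      sum_le_sum fun b hb => by nlinarith [hD b hb, hP a₀ b]
    have hE : 0 ≤ ∑ b ∈ Rᶜ, P a₀ b * h b := sum_nonneg fun b _ => mul_nonneg (hP a₀ b) (hh b)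
    linarith
  have hC : ∑ b ∈ R \ D, P a₀ b = 1 - ∑ b ∈ D, P a₀ b - ∑ b ∈ Rᶜ, P a₀ b := by
    linarith [hsplit (P a₀), hP1 a₀]
  rw [hC] at hlow
  have hE : 0 ≤ ∑ b ∈ Rᶜ, P a₀ b := sum_nonneg fun b _ => hP a₀ b
  have hkey : p * β * (∑ b ∈ D, P a₀ b + ∑ b ∈ Rᶜ, P a₀ b) ≤
      h a₀ * (∑ b ∈ D, P a₀ b + ∑ b ∈ Rᶜ, P a₀ b) := by
    linarith [mul_le_mul_of_nonneg_left (hexit a₀ ha₀) hβ]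
  exact le_of_mul_le_mul_right hkey (by linarith [hpos a₀ ha₀])

omit [Fintype V] in
lemma moranNext_empty (u v : V) : moranNext (∅ : Finset V) u v = ∅ := by
  simp [moranNext]

lemma moranNext_univ (u v : V) : moranNext (univ : Finset V) u v = univ := by
  simp [moranNext]

namespace FitnessGraph

variable (G : FitnessGraph V)

noncomputable def moveProb (X : Finset V) (u v : V) : ℝ :=
  G.fit X u / G.totalFit X * G.w u v

lemma step_eq_sum_moveProb (X Y : Finset V) :
    G.step X Y = ∑ u, ∑ v, G.moveProb X u v * if moranNext X u v = Y then 1 else 0 :=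
  rfl

lemma sum_step_mul (X : Finset V) (g : Finset V → ℝ) :
    ∑ Y, G.step X Y * g Y = ∑ u, ∑ v, G.moveProb X u v * g (moranNext X u v) := by
  simp only [step_eq_sum_moveProb, sum_mul, mul_assoc, ite_mul, one_mul, zero_mul]
  rw [sum_comm]
  refine sum_congr rfl fun u _ => ?_
  rw [sum_comm]
  simp

lemma stepN_eq_pow (t : ℕ) (X Y : Finset V) : G.stepN t X Y = (Matrix.of G.step ^ t) X Y := by
  induction t generalizing Y with
  | zero => simp [stepN, Matrix.one_apply]
  | succ t ih => simp [stepN, pow_succ, Matrix.mul_apply, ih]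

lemma stepN_succ' (t : ℕ) (X Y : Finset V) :
    G.stepN (t + 1) X Y = ∑ Z, G.step X Z * G.stepN t Z Y := by
  simp [stepN_eq_pow, pow_succ', Matrix.mul_apply]

lemma sum_moveProb (X : Finset V) (u : V) :
    ∑ v, G.moveProb X u v = G.fit X u / G.totalFit X := by
  simp only [moveProb, ← mul_sum, G.w_rowsum u, mul_one]

lemma fit_pos (X : Finset V) (u : V) : 0 < G.fit X u := by
  unfold fit
  split
  · exact G.m_pos u
  · exact G.r_pos u

variable [Nonempty V]

lemma totalFit_pos (X : Finset V) : 0 < G.totalFit X :=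
  sum_pos (fun u _ => G.fit_pos X u) univ_nonempty

lemma moveProb_nonneg (X : Finset V) (u v : V) : 0 ≤ G.moveProb X u v :=
  mul_nonneg (div_nonneg (G.fit_pos X u).le (G.totalFit_pos X).le) (G.w_nonneg u v)

lemma sum_sum_moveProb (X : Finset V) : ∑ u, ∑ v, G.moveProb X u v = 1 := by
  simp only [sum_moveProb, ← sum_div]
  exact div_self (G.totalFit_pos X).ne'

lemma step_nonneg (X Y : Finset V) : 0 ≤ G.step X Y :=
  sum_nonneg fun u _ => sum_nonneg fun v _ =>
    mul_nonneg (G.moveProb_nonneg X u v) (by split <;> norm_num)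

lemma sum_step (X : Finset V) : ∑ Y, G.step X Y = 1 := by
  simpa [G.sum_sum_moveProb] using G.sum_step_mul X 1

lemma of_step_mem_rowStochastic : Matrix.of G.step ∈ Matrix.rowStochastic ℝ (Finset V) :=
  Matrix.mem_rowStochastic_iff_sum.2 ⟨G.step_nonneg, G.sum_step⟩

lemma stepN_nonneg (t : ℕ) (X Y : Finset V) : 0 ≤ G.stepN t X Y := by
  rw [stepN_eq_pow]
  exact Matrix.nonneg_of_mem_rowStochastic (pow_mem G.of_step_mem_rowStochastic t)

lemma stepN_le_one (t : ℕ) (X Y : Finset V) : G.stepN t X Y ≤ 1 := by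
  rw [stepN_eq_pow]
  exact Matrix.le_one_of_mem_rowStochastic (pow_mem G.of_step_mem_rowStochastic t)

lemma sum_stepN (t : ℕ) (X : Finset V) : ∑ Y, G.stepN t X Y = 1 := by
  simp only [stepN_eq_pow]
  exact Matrix.sum_row_of_mem_rowStochastic (pow_mem G.of_step_mem_rowStochastic t) X

lemma monotone_stepN_of_absorbing {A : Finset V} (hA : ∀ u v, moranNext A u v = A)
    (X : Finset V) : Monotone fun t => G.stepN t X A := by
  have hAA : G.step A A = 1 := by simp [step_eq_sum_moveProb, hA, G.sum_sum_moveProb]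
  refine monotone_nat_of_le_succ fun t => ?_
  calc G.stepN t X A = G.stepN t X A * G.step A A := by rw [hAA, mul_one]
    _ ≤ ∑ Z, G.stepN t X Z * G.step Z A :=
      single_le_sum (fun Z _ => mul_nonneg (G.stepN_nonneg t X Z) (G.step_nonneg Z A))
        (mem_univ A)

lemma moveProb_le_step (X : Finset V) (u v : V) :
    G.moveProb X u v ≤ G.step X (moranNext X u v) := by
  set Y := moranNext X u v with hY
  have hterm : ∀ u' v', 0 ≤ G.moveProb X u' v' * if moranNext X u' v' = Y then 1 else 0 :=
    fun u' v' => mul_nonneg (G.moveProb_nonneg X u' v') (by split <;> norm_num)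
  calc G.moveProb X u v = G.moveProb X u v * if moranNext X u v = Y then 1 else 0 := by simp [hY]
    _ ≤ ∑ v', G.moveProb X u v' * if moranNext X u v' = Y then 1 else 0 :=
      single_le_sum (fun v' _ => hterm u v') (mem_univ v)
    _ ≤ G.step X (moranNext X u v) :=
      single_le_sum (fun u' _ => sum_nonneg fun v' _ => hterm u' v') (mem_univ u)

lemma sum_step_le (X : Finset V) (E : Finset (Finset V)) (R : Finset V)
    (hR : ∀ u ∉ R, ∀ v, 0 < G.w u v → moranNext X u v ∉ E) :
    ∑ Y ∈ E, G.step X Y ≤ (∑ u ∈ R, G.fit X u) / G.totalFit X := by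
  calc ∑ Y ∈ E, G.step X Y = ∑ Y, G.step X Y * if Y ∈ E then 1 else 0 := by simp
    _ = ∑ u, ∑ v, G.moveProb X u v * if moranNext X u v ∈ E then 1 else 0 := G.sum_step_mul X _
    _ ≤ ∑ u, if u ∈ R then ∑ v, G.moveProb X u v else 0 := by
      refine sum_le_sum fun u _ => ?_
      split_ifs with hu
      · exact sum_le_sum fun v _ => by
          split_ifs <;> nlinarith [G.moveProb_nonneg X u v]
      · refine (sum_eq_zero fun v _ => ?_).le
        rcases (G.w_nonneg u v).eq_or_lt with hw | hw
        · simp [moveProb, ← hw]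
        · simp [hR u hu v hw]
    _ = (∑ u ∈ R, G.fit X u) / G.totalFit X := by
      simp [sum_moveProb, sum_div]

noncomputable def extinctionProb (X : Finset V) : ℝ :=
  ⨆ t : ℕ, G.stepN t X ∅

lemma bddAbove_range_stepN (X Y : Finset V) : BddAbove (Set.range fun t => G.stepN t X Y) :=
  ⟨1, Set.forall_mem_range.2 fun t => G.stepN_le_one t X Y⟩

lemma stepN_le_extinctionProb (t : ℕ) (X : Finset V) : G.stepN t X ∅ ≤ G.extinctionProb X :=
  le_ciSup (G.bddAbove_range_stepN X ∅) t

lemma extinctionProb_nonneg (X : Finset V) : 0 ≤ G.extinctionProb X :=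
  (G.stepN_nonneg 0 X ∅).trans (G.stepN_le_extinctionProb 0 X)

lemma extinctionProb_empty : G.extinctionProb ∅ = 1 :=
  le_antisymm (ciSup_le fun t => G.stepN_le_one t ∅ ∅)
    (by simpa [stepN] using G.stepN_le_extinctionProb 0 ∅)

lemma extinctionProb_superharmonic (X : Finset V) :
    ∑ Y, G.step X Y * G.extinctionProb Y ≤ G.extinctionProb X := by
  have hlim : Filter.Tendsto (fun t => ∑ Y, G.step X Y * G.stepN t Y ∅) Filter.atTop
      (nhds (∑ Y, G.step X Y * G.extinctionProb Y)) :=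
    tendsto_finsetSum _ fun Y _ => (tendsto_atTop_ciSup
      (G.monotone_stepN_of_absorbing moranNext_empty Y) (G.bddAbove_range_stepN Y ∅)).const_mul _
  refine le_of_tendsto hlim (Filter.Eventually.of_forall fun t => ?_)
  rw [← stepN_succ']
  exact G.stepN_le_extinctionProb (t + 1) X

lemma fp_le_one_sub_extinctionProb (S : Finset V) : G.fp S ≤ 1 - G.extinctionProb S := by
  have hpair : ∀ t t', G.stepN t S univ + G.stepN t' S ∅ ≤ 1 := by
    intro t t'
    have hfix := G.monotone_stepN_of_absorbing moranNext_univ S (le_max_left t t')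
    have hext := G.monotone_stepN_of_absorbing moranNext_empty S (le_max_right t t')
    have hsum : G.stepN (max t t') S univ + G.stepN (max t t') S ∅ ≤ 1 := by
      rw [← sum_pair (univ_nonempty.ne_empty), ← G.sum_stepN (max t t') S]
      exact sum_le_sum_of_subset_of_nonneg (subset_univ _) fun Z _ _ => G.stepN_nonneg _ S Z
    simp only at hfix hext
    linarith
  refine ciSup_le fun t => ?_
  have : G.extinctionProb S ≤ 1 - G.stepN t S univ :=
    ciSup_le fun t' => by linarith [hpair t t']
  linarith

end FitnessGraph

section SetCover

variable {U : Type} {𝒮 : Finset (Finset U)} {X X' : Finset ({A // A ∈ 𝒮} ⊕ U)}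

def NotCover (𝒮 : Finset (Finset U)) (X : Finset ({A // A ∈ 𝒮} ⊕ U)) : Prop :=
  ∃ e : U, ∀ A : {A // A ∈ 𝒮}, Sum.inl A ∈ X → e ∉ A.1

lemma NotCover.mono (h : X' ⊆ X) (hX : NotCover 𝒮 X) : NotCover 𝒮 X' :=
  hX.imp fun _ he A hA => he A (h hA)

variable [DecidableEq U]

lemma NotCover.insert_inr (e : U) (hX : NotCover 𝒮 X) : NotCover 𝒮 (insert (Sum.inr e) X) :=
  hX.imp fun _ he A hA => he A (by simpa using hA)

variable [Fintype U]

def coverClosure (𝒮 : Finset (Finset U)) (X : Finset ({A // A ∈ 𝒮} ⊕ U)) :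
    Finset ({A // A ∈ 𝒮} ⊕ U) :=
  X ∪ (univ.filter fun e => ∃ A : {A // A ∈ 𝒮}, Sum.inl A ∈ X ∧ e ∈ A.1).map
    Function.Embedding.inr

@[simp]
lemma inl_mem_coverClosure {A : {A // A ∈ 𝒮}} : Sum.inl A ∈ coverClosure 𝒮 X ↔ Sum.inl A ∈ X := by
  simp [coverClosure]

@[simp]
lemma inr_mem_coverClosure {e : U} :
    Sum.inr e ∈ coverClosure 𝒮 X ↔ Sum.inr e ∈ X ∨ ∃ A : {A // A ∈ 𝒮}, Sum.inl A ∈ X ∧ e ∈ A.1 := by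
  simp [coverClosure]

lemma subset_coverClosure : X ⊆ coverClosure 𝒮 X :=
  subset_union_left

lemma coverClosure_mono (h : X ⊆ X') : coverClosure 𝒮 X ⊆ coverClosure 𝒮 X' := by
  rintro (A | e) hv
  · simpa using h (inl_mem_coverClosure.1 hv)
  · simp only [inr_mem_coverClosure] at hv ⊢
    exact hv.imp (fun he => h he) fun ⟨A, hA, he⟩ => ⟨A, h hA, he⟩

lemma coverClosure_insert_of_mem {A : {A // A ∈ 𝒮}} {e : U} (hA : Sum.inl A ∈ X) (he : e ∈ A.1) :
    coverClosure 𝒮 (insert (Sum.inr e) X) = coverClosure 𝒮 X := by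
  ext (B | e')
  · simp
  · simp only [inr_mem_coverClosure, mem_insert, Sum.inr.injEq, reduceCtorEq, false_or]
    constructor
    · rintro ((rfl | h) | h)
      · exact Or.inr ⟨A, hA, he⟩
      · exact Or.inl h
      · exact Or.inr h
    · exact fun h => h.imp Or.inr id

noncomputable def notCoverRegion (𝒮 : Finset (Finset U)) (k : ℕ) :
    Finset (Finset ({A // A ∈ 𝒮} ⊕ U)) :=
  univ.filter fun X => NotCover 𝒮 X ∧ (coverClosure 𝒮 X).card ≤ k

@[simp]
lemma mem_notCoverRegion {k : ℕ} :
    X ∈ notCoverRegion 𝒮 k ↔ NotCover 𝒮 X ∧ (coverClosure 𝒮 X).card ≤ k := by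
  simp [notCoverRegion]

lemma notCoverRegion_mono {k l : ℕ} (h : k ≤ l) : notCoverRegion 𝒮 k ⊆ notCoverRegion 𝒮 l :=
  fun _ hX => mem_notCoverRegion.2 ((mem_notCoverRegion.1 hX).imp_right (·.trans h))

end SetCover

noncomputable def escapeRatio (n : ℕ) (y : ℝ) : ℝ :=
  1 / (n : ℝ) / (1 / (n : ℝ) + ((n : ℝ) - 1) * y)

section EscapeRatio

variable {n : ℕ} {y : ℝ}

lemma escapeRatio_nonneg (hy : 0 ≤ y) (hn : 1 ≤ n) : 0 ≤ escapeRatio n y := by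
  have : (1 : ℝ) ≤ n := by exact_mod_cast hn
  unfold escapeRatio
  have : 0 ≤ ((n : ℝ) - 1) * y := mul_nonneg (by linarith) hy
  positivity

lemma escapeRatio_le_one (hy : 0 ≤ y) (hn : 1 ≤ n) : escapeRatio n y ≤ 1 := by
  have : (1 : ℝ) ≤ n := by exact_mod_cast hn
  have : 0 ≤ ((n : ℝ) - 1) * y := mul_nonneg (by linarith) hy
  exact div_le_one_of_le₀ (by linarith) (by positivity)

lemma escapeRatio_mul_le {F a b : ℝ} (hy : 0 ≤ y) (hn : 1 ≤ n) (hF : 0 < F)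
    (ha : 1 / (n : ℝ) / F ≤ a) (hb₀ : 0 ≤ b) (hb : b ≤ ((n : ℝ) - 1) * y / F) :
    escapeRatio n y * (a + b) ≤ a := by
  have hn' : (1 : ℝ) ≤ n := by exact_mod_cast hn
  set c := 1 / (n : ℝ) / F
  set d := ((n : ℝ) - 1) * y / F
  have hc : 0 < c := by positivity
  have hd : 0 ≤ d := div_nonneg (mul_nonneg (by linarith) hy) hF.le
  have hratio : escapeRatio n y = c / (c + d) := by
    rw [← add_div, div_div_div_cancel_right₀ hF.ne']
    rfl
  rw [hratio, div_mul_eq_mul_div, div_le_iff₀ (by positivity)]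
  nlinarith

end EscapeRatio

namespace IsSetCoverGraph

variable {U : Type} [Fintype U] [DecidableEq U] {𝒮 : Finset (Finset U)} {x y : ℝ}
  {G : FitnessGraph ({A // A ∈ 𝒮} ⊕ U)} {X : Finset ({A // A ∈ 𝒮} ⊕ U)}

lemma one_div_card_le_w_inr_inl (hG : IsSetCoverGraph 𝒮 x y G) (e : U) (A : {A // A ∈ 𝒮}) :
    1 / (Fintype.card ({A // A ∈ 𝒮} ⊕ U) : ℝ) ≤ G.w (Sum.inr e) (Sum.inl A) := by
  rw [hG.2.2.1 e A]
  refine one_div_le_one_div_of_le (by exact_mod_cast card_pos.2 ⟨A.1, A.2⟩) ?_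
  simp

lemma one_div_card_le_w_inl_inr (hG : IsSetCoverGraph 𝒮 x y G) {A : {A // A ∈ 𝒮}} {e : U}
    (he : e ∈ A.1) :
    1 / (Fintype.card ({A // A ∈ 𝒮} ⊕ U) : ℝ) ≤ G.w (Sum.inl A) (Sum.inr e) := by
  rw [hG.1 A e, if_pos he]
  refine one_div_le_one_div_of_le (by exact_mod_cast card_pos.2 ⟨e, he⟩) ?_
  rw [Fintype.card_sum, Fintype.card_coe]
  exact_mod_cast A.1.card_le_univ.trans (Nat.le_add_left _ _)

lemma exists_shrinking_move_of_uncovered (hcov : ∀ e : U, ∃ A ∈ 𝒮, e ∈ A)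
    (hG : IsSetCoverGraph 𝒮 x y G) {e : U} (heX : Sum.inr e ∈ X)
    (he : ∀ A : {A // A ∈ 𝒮}, Sum.inl A ∈ X → e ∉ A.1) :
    ∃ u v, u ∉ X ∧ 1 / (Fintype.card ({A // A ∈ 𝒮} ⊕ U) : ℝ) ≤ G.w u v ∧
      coverClosure 𝒮 (X.erase v) ⊂ coverClosure 𝒮 X := by
  obtain ⟨A, hA𝒮, heA⟩ := hcov e
  refine ⟨Sum.inl ⟨A, hA𝒮⟩, Sum.inr e, fun h => he _ h heA,
    hG.one_div_card_le_w_inl_inr heA, ?_⟩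
  refine (ssubset_iff_of_subset (coverClosure_mono (erase_subset _ _))).2
    ⟨Sum.inr e, subset_coverClosure heX, ?_⟩
  simp only [inr_mem_coverClosure, mem_erase, ne_eq, not_true_eq_false, false_and, false_or,
    not_exists, not_and]
  exact fun B hB => he B hB.2

lemma exists_shrinking_move (hcov : ∀ e : U, ∃ A ∈ 𝒮, e ∈ A) (hG : IsSetCoverGraph 𝒮 x y G)
    (hX : NotCover 𝒮 X) (hXne : X.Nonempty) :
    ∃ u v, u ∉ X ∧ 1 / (Fintype.card ({A // A ∈ 𝒮} ⊕ U) : ℝ) ≤ G.w u v ∧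
      coverClosure 𝒮 (X.erase v) ⊂ coverClosure 𝒮 X := by
  by_cases hset : ∃ A : {A // A ∈ 𝒮}, Sum.inl A ∈ X
  · obtain ⟨A, hA⟩ := hset
    by_cases hres : ∃ e : U, Sum.inr e ∉ X
    · obtain ⟨e, he⟩ := hres
      refine ⟨Sum.inr e, Sum.inl A, he, hG.one_div_card_le_w_inr_inl e A, ?_⟩
      refine (ssubset_iff_of_subset (coverClosure_mono (erase_subset _ _))).2
        ⟨Sum.inl A, subset_coverClosure hA, by simp⟩
    · obtain ⟨e, he⟩ := hX
      exact exists_shrinking_move_of_uncovered hcov hG (not_not.1 fun h => hres ⟨e, h⟩) he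
  · obtain ⟨(A | e), hv⟩ := hXne
    · exact absurd ⟨A, hv⟩ hset
    · exact exists_shrinking_move_of_uncovered hcov hG hv fun A hA => absurd ⟨A, hA⟩ hset

lemma moranNext_mem_notCoverRegion (hG : IsSetCoverGraph 𝒮 x y G) {k : ℕ}
    (hX : X ∈ notCoverRegion 𝒮 k) {u v : {A // A ∈ 𝒮} ⊕ U} (hu : u ∈ X → u.isLeft)
    (hw : 0 < G.w u v) : moranNext X u v ∈ notCoverRegion 𝒮 k := by
  rw [mem_notCoverRegion] at hX ⊢
  by_cases huX : u ∈ X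
  · obtain ⟨A, rfl⟩ := Sum.isLeft_iff.1 (hu huX)
    rcases v with B | e
    · exact absurd hw (by simp [hG.2.1 A B])
    · have he : e ∈ A.1 := by
        by_contra he
        simp [hG.1 A e, he] at hw
      simp only [moranNext, if_pos huX]
      rw [coverClosure_insert_of_mem huX he]
      exact ⟨hX.1.insert_inr e, hX.2⟩
  · simp only [moranNext, if_neg huX]
    exact ⟨hX.1.mono (erase_subset _ _),
      (card_le_card (coverClosure_mono (erase_subset _ _))).trans hX.2⟩

lemma y_pos [Nonempty U] (hG : IsSetCoverGraph 𝒮 x y G) : 0 < y :=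
  hG.2.2.2.2.2.1 (Classical.arbitrary U) ▸ G.m_pos _

lemma div_totalFit_le_sum_step (hcov : ∀ e : U, ∃ A ∈ 𝒮, e ∈ A) (hG : IsSetCoverGraph 𝒮 x y G)
    {k : ℕ} (hX : X ∈ notCoverRegion 𝒮 (k + 1) \ notCoverRegion 𝒮 k) :
    1 / (Fintype.card ({A // A ∈ 𝒮} ⊕ U) : ℝ) / G.totalFit X ≤
      ∑ Y ∈ notCoverRegion 𝒮 k, G.step X Y := by
  simp only [mem_sdiff, mem_notCoverRegion, not_and, not_le] at hX
  obtain ⟨⟨hXnc, hXcard⟩, hXbig⟩ := hX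
  have : Nonempty U := ⟨hXnc.choose⟩
  have hXne : X.Nonempty := by
    rw [nonempty_iff_ne_empty]
    rintro rfl
    simpa [coverClosure] using hXbig hXnc
  obtain ⟨u, v, hu, hw, hshrink⟩ := hG.exists_shrinking_move hcov hXnc hXne
  have hfit : G.fit X u = 1 := by rw [FitnessGraph.fit, if_neg hu, hG.2.2.2.2.2.2 u]
  have hmem : moranNext X u v ∈ notCoverRegion 𝒮 k := by
    rw [moranNext, if_neg hu, mem_notCoverRegion]
    have := card_lt_card hshrink
    exact ⟨hXnc.mono (erase_subset _ _), by omega⟩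
  calc 1 / (Fintype.card ({A // A ∈ 𝒮} ⊕ U) : ℝ) / G.totalFit X ≤ G.moveProb X u v := by
        rw [FitnessGraph.moveProb, hfit, div_mul_eq_mul_div, one_mul]
        exact div_le_div_of_nonneg_right hw (G.totalFit_pos X).le
    _ ≤ G.step X (moranNext X u v) := G.moveProb_le_step X u v
    _ ≤ ∑ Y ∈ notCoverRegion 𝒮 k, G.step X Y :=
        single_le_sum (fun Y _ => G.step_nonneg X Y) hmem

lemma sum_step_compl_le (hG : IsSetCoverGraph 𝒮 x y G) {k : ℕ} (hX : X ∈ notCoverRegion 𝒮 k) :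
    ∑ Y ∈ (notCoverRegion 𝒮 k)ᶜ, G.step X Y ≤ Fintype.card U * y / G.totalFit X := by
  have : Nonempty U := ⟨(mem_notCoverRegion.1 hX).1.choose⟩
  set R := (univ.filter fun e => Sum.inr e ∈ X).map Function.Embedding.inr
  have hR : ∀ u ∉ R, ∀ v, 0 < G.w u v → moranNext X u v ∉ (notCoverRegion 𝒮 k)ᶜ := by
    intro u hu v hw
    refine notMem_compl.2 (hG.moranNext_mem_notCoverRegion hX (fun huX => ?_) hw)
    rcases u with A | e
    · rfl
    · exact absurd (mem_map_of_mem _ (mem_filter.2 ⟨mem_univ e, huX⟩)) hu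
  refine (G.sum_step_le X _ R hR).trans (div_le_div_of_nonneg_right ?_ (G.totalFit_pos X).le)
  calc ∑ u ∈ R, G.fit X u = ∑ e ∈ univ.filter fun e => Sum.inr e ∈ X, y := by
        rw [sum_map]
        refine sum_congr rfl fun e he => ?_
        simp [FitnessGraph.fit, (mem_filter.1 he).2, hG.2.2.2.2.2.1 e]
    _ ≤ Fintype.card U * y := by
        rw [sum_const, nsmul_eq_mul]
        exact mul_le_mul_of_nonneg_right (by exact_mod_cast card_filter_le _ _) hG.y_pos.le

lemma pow_escapeRatio_le_extinctionProb (hcov : ∀ e : U, ∃ A ∈ 𝒮, e ∈ A)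
    (hG : IsSetCoverGraph 𝒮 x y G) (k : ℕ) :
    ∀ X ∈ notCoverRegion 𝒮 k,
      escapeRatio (Fintype.card ({A // A ∈ 𝒮} ⊕ U)) y ^ k ≤ G.extinctionProb X := by
  induction k with
  | zero =>
    intro X hX
    have : Nonempty U := ⟨(mem_notCoverRegion.1 hX).1.choose⟩
    have hX0 : X = ∅ := subset_empty.1 <|
      card_eq_zero.1 (Nat.le_zero.1 (mem_notCoverRegion.1 hX).2) ▸ subset_coverClosure
    rw [hX0, pow_zero, G.extinctionProb_empty]
  | succ k ih =>
    intro X hX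
    have : Nonempty U := ⟨(mem_notCoverRegion.1 hX).1.choose⟩
    have hy := hG.y_pos.le
    have hn : 1 ≤ Fintype.card ({A // A ∈ 𝒮} ⊕ U) := Fintype.card_pos
    have hU : (Fintype.card U : ℝ) ≤ Fintype.card ({A // A ∈ 𝒮} ⊕ U) - 1 := by
      obtain ⟨A, hA, -⟩ := hcov (Classical.arbitrary U)
      have : 1 ≤ 𝒮.card := card_pos.2 ⟨A, hA⟩
      rw [Fintype.card_sum, Fintype.card_coe]
      push_cast
      linarith [(Nat.one_le_cast (α := ℝ)).2 this]
    rw [pow_succ']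
    refine mul_le_of_superharmonic G.step_nonneg G.sum_step G.extinctionProb_nonneg
      G.extinctionProb_superharmonic (notCoverRegion_mono k.le_succ)
      (pow_nonneg (escapeRatio_nonneg hy hn) k) (escapeRatio_le_one hy hn) ih
      (fun Y hY => lt_of_lt_of_le (div_pos (by positivity) (G.totalFit_pos Y))
        (hG.div_totalFit_le_sum_step hcov hY))
      (fun Y hY => escapeRatio_mul_le hy hn (G.totalFit_pos Y)
        (hG.div_totalFit_le_sum_step hcov hY) (sum_nonneg fun Z _ => G.step_nonneg Y Z)
        ((hG.sum_step_compl_le (mem_sdiff.1 hY).1).trans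
          (div_le_div_of_nonneg_right (mul_le_mul_of_nonneg_right hU hy)
            (G.totalFit_pos Y).le))) X hX

end IsSetCoverGraph

theorem fp_upper_of_not_cover_general {U : Type} [Fintype U] [DecidableEq U]
    (𝒮 : Finset (Finset U)) (hcov : ∀ e : U, ∃ A ∈ 𝒮, e ∈ A)
    (x y : ℝ)
    (G : FitnessGraph ({A // A ∈ 𝒮} ⊕ U)) (hG : IsSetCoverGraph 𝒮 x y G)
    (S : Finset ({A // A ∈ 𝒮} ⊕ U))
    (hSnotcov : ∃ e : U, ∀ A : {A // A ∈ 𝒮}, Sum.inl A ∈ S → e ∉ A.1) :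
    G.fp S ≤ 1 -
      ((1 / (Fintype.card ({A // A ∈ 𝒮} ⊕ U) : ℝ)) /
        (1 / (Fintype.card ({A // A ∈ 𝒮} ⊕ U) : ℝ) +
          ((Fintype.card ({A // A ∈ 𝒮} ⊕ U) : ℝ) - 1) * y)) ^
        (Fintype.card ({A // A ∈ 𝒮} ⊕ U)) := by
  obtain ⟨e, he⟩ := hSnotcov
  have : Nonempty U := ⟨e⟩
  obtain ⟨A, hA, heA⟩ := hcov e
  set n := Fintype.card ({A // A ∈ 𝒮} ⊕ U)
  have hS : S ∈ notCoverRegion 𝒮 (n - 1) := by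
    refine mem_notCoverRegion.2 ⟨⟨e, he⟩, ?_⟩
    have hsub : coverClosure 𝒮 S ⊆ univ.erase (Sum.inl ⟨A, hA⟩) := fun v hv =>
      mem_erase.2 ⟨by rintro rfl; exact he _ (inl_mem_coverClosure.1 hv) heA, mem_univ v⟩
    simpa only [card_erase_of_mem (mem_univ _), card_univ] using card_le_card hsub
  have hy := hG.y_pos.le
  have hn : 1 ≤ n := Fintype.card_pos
  calc G.fp S ≤ 1 - G.extinctionProb S := G.fp_le_one_sub_extinctionProb S
    _ ≤ 1 - escapeRatio n y ^ (n - 1) := by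
      linarith [hG.pow_escapeRatio_le_extinctionProb hcov (n - 1) S hS]
    _ ≤ 1 - escapeRatio n y ^ n := by
      linarith [pow_le_pow_of_le_one (escapeRatio_nonneg hy hn) (escapeRatio_le_one hy hn)
        (Nat.sub_le n 1)]

/-- If the seed set `S` does not cover the universe, then the fixation probability in the
Set Cover fitness graph is at most `1 − ((1/n)/((1/n)+(n−1)y))^n`. -/
theorem fp_upper_of_not_cover {U : Type} [Fintype U] [DecidableEq U] [Nonempty U]
    (𝒮 : Finset (Finset U)) (hne : ∀ A ∈ 𝒮, A.Nonempty) (hcov : ∀ e : U, ∃ A ∈ 𝒮, e ∈ A)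
    (x y : ℝ) (hx : 1 ≤ x) (hy0 : 0 < y) (hy1 : y ≤ 1)
    (G : FitnessGraph ({A // A ∈ 𝒮} ⊕ U)) (hG : IsSetCoverGraph 𝒮 x y G)
    (S : Finset ({A // A ∈ 𝒮} ⊕ U))
    (hSnotcov : ∃ e : U, ∀ A : {A // A ∈ 𝒮}, Sum.inl A ∈ S → e ∉ A.1) :
    G.fp S ≤ 1 -
      ((1 / (Fintype.card ({A // A ∈ 𝒮} ⊕ U) : ℝ)) /
        (1 / (Fintype.card ({A // A ∈ 𝒮} ⊕ U) : ℝ) +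
          ((Fintype.card ({A // A ∈ 𝒮} ⊕ U) : ℝ) - 1) * y)) ^
        (Fintype.card ({A // A ∈ 𝒮} ⊕ U)) :=
  fp_upper_of_not_cover_general 𝒮 hcov x y G hG S hSnotcov
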